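/- arXiv:2507.21978 — 4 statements merged into one kernel-verified Lean document; each statement's English description precedes it below -/
import Mathlib

section
/- For the 8-dimensional module P on k⁸ given by the matrices [a₁] and [a₂] below with parameters α₁, α₂, α₃ ∈ k, the relations [a₁]² = α₁·I, [a₂]² = α₂·I, and ([a₁][a₂])² + ([a₂][a₁])² = α₃·I hold. Here [a₁] has entries: (1,2)=α₁,(2,1)=1,(3,4)=α₁,(4,3)=1,(5,6)=α₁,(6,5)=1,(7,8)=α₁,(8,7)=1, all others zero; [a₂] has entries: (1,3)=α₂,(1,6)=α₃,(2,5)=α₂,(3,1)=1,(3,8)=α₃,(4,7)=α₂,(5,2)=1,(6,8)=−α₂,(7,4)=1,(8,6)=−1, all others zero. -/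
set_option maxHeartbeats 2000000

open Matrix in
@[simp] lemma cons_val_five' {α : Type*} {m : ℕ} (x : α) (u : Fin m.succ.succ.succ.succ.succ → α) :
    vecCons x u 5 = vecHead (vecTail (vecTail (vecTail (vecTail u)))) := rfl
open Matrix in
@[simp] lemma cons_val_six' {α : Type*} {m : ℕ} (x : α) (u : Fin m.succ.succ.succ.succ.succ.succ → α) :
    vecCons x u 6 = vecHead (vecTail (vecTail (vecTail (vecTail (vecTail u))))) := rfl
open Matrix in
@[simp] lemma cons_val_seven' {α : Type*} {m : ℕ} (x : α) (u : Fin m.succ.succ.succ.succ.succ.succ.succ → α) :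
    vecCons x u 7 = vecHead (vecTail (vecTail (vecTail (vecTail (vecTail (vecTail u)))))) := rfl
open Matrix in
@[simp] lemma vecTail_const' {α : Type*} {n : ℕ} (a : α) :
    vecTail (fun _ : Fin (n+1) => a) = fun _ : Fin n => a := rfl

lemma aux1 (k : Type*) [Field k] (α₁ α₂ α₃ : k) :
    (!![0,α₁,0,0,0,0,0,0;
         1,0,0,0,0,0,0,0;
         0,0,0,α₁,0,0,0,0;
         0,0,1,0,0,0,0,0;
         0,0,0,0,0,α₁,0,0;
         0,0,0,0,1,0,0,0;
         0,0,0,0,0,0,0,α₁;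
         0,0,0,0,0,0,1,0] : Matrix (Fin 8) (Fin 8) k) ^ 2
      = α₁ • (1 : Matrix (Fin 8) (Fin 8) k) := by
  ext i j
  fin_cases i <;> fin_cases j <;>
    simp [pow_two, Matrix.mul_apply, Fin.sum_univ_eight, Matrix.one_apply] <;> ring

lemma aux2 (k : Type*) [Field k] (α₁ α₂ α₃ : k) :
    (!![0,0,α₂,0,0,α₃,0,0;
         0,0,0,0,α₂,0,0,0;
         1,0,0,0,0,0,0,α₃;
         0,0,0,0,0,0,α₂,0;
         0,1,0,0,0,0,0,0;
         0,0,0,0,0,0,0,-α₂;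
         0,0,0,1,0,0,0,0;
         0,0,0,0,0,-1,0,0] : Matrix (Fin 8) (Fin 8) k) ^ 2
      = α₂ • (1 : Matrix (Fin 8) (Fin 8) k) := by
  ext i j
  fin_cases i <;> fin_cases j <;>
    simp [pow_two, Matrix.mul_apply, Fin.sum_univ_eight, Matrix.one_apply] <;> ring

lemma aux12 (k : Type*) [Field k] (α₁ α₂ α₃ : k) :
    (!![0,α₁,0,0,0,0,0,0;
         1,0,0,0,0,0,0,0;
         0,0,0,α₁,0,0,0,0;
         0,0,1,0,0,0,0,0;
         0,0,0,0,0,α₁,0,0;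
         0,0,0,0,1,0,0,0;
         0,0,0,0,0,0,0,α₁;
         0,0,0,0,0,0,1,0] : Matrix (Fin 8) (Fin 8) k) *
      !![0,0,α₂,0,0,α₃,0,0;
         0,0,0,0,α₂,0,0,0;
         1,0,0,0,0,0,0,α₃;
         0,0,0,0,0,0,α₂,0;
         0,1,0,0,0,0,0,0;
         0,0,0,0,0,0,0,-α₂;
         0,0,0,1,0,0,0,0;
         0,0,0,0,0,-1,0,0] =
      !![0,0,0,0,α₁*α₂,0,0,0;
         0,0,α₂,0,0,α₃,0,0;
         0,0,0,0,0,0,α₁*α₂,0;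
         1,0,0,0,0,0,0,α₃;
         0,0,0,0,0,0,0,-(α₁*α₂);
         0,1,0,0,0,0,0,0;
         0,0,0,0,0,-α₁,0,0;
         0,0,0,1,0,0,0,0] := by
  ext i j
  fin_cases i <;> fin_cases j <;>
    simp [Matrix.mul_apply, Fin.sum_univ_eight] <;> ring

lemma aux21 (k : Type*) [Field k] (α₁ α₂ α₃ : k) :
    (!![0,0,α₂,0,0,α₃,0,0;
         0,0,0,0,α₂,0,0,0;
         1,0,0,0,0,0,0,α₃;
         0,0,0,0,0,0,α₂,0;
         0,1,0,0,0,0,0,0;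
         0,0,0,0,0,0,0,-α₂;
         0,0,0,1,0,0,0,0;
         0,0,0,0,0,-1,0,0] : Matrix (Fin 8) (Fin 8) k) *
      !![0,α₁,0,0,0,0,0,0;
         1,0,0,0,0,0,0,0;
         0,0,0,α₁,0,0,0,0;
         0,0,1,0,0,0,0,0;
         0,0,0,0,0,α₁,0,0;
         0,0,0,0,1,0,0,0;
         0,0,0,0,0,0,0,α₁;
         0,0,0,0,0,0,1,0] =
      !![0,0,0,α₁*α₂,α₃,0,0,0;
         0,0,0,0,0,α₁*α₂,0,0;
         0,α₁,0,0,0,0,α₃,0;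
         0,0,0,0,0,0,0,α₁*α₂;
         1,0,0,0,0,0,0,0;
         0,0,0,0,0,0,-α₂,0;
         0,0,1,0,0,0,0,0;
         0,0,0,0,-1,0,0,0] := by
  ext i j
  fin_cases i <;> fin_cases j <;>
    simp [Matrix.mul_apply, Fin.sum_univ_eight] <;> ring

lemma aux3a (k : Type*) [Field k] (α₁ α₂ α₃ : k) :
    (!![0,0,0,0,α₁*α₂,0,0,0;
         0,0,α₂,0,0,α₃,0,0;
         0,0,0,0,0,0,α₁*α₂,0;
         1,0,0,0,0,0,0,α₃;
         0,0,0,0,0,0,0,-(α₁*α₂);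
         0,1,0,0,0,0,0,0;
         0,0,0,0,0,-α₁,0,0;
         0,0,0,1,0,0,0,0] : Matrix (Fin 8) (Fin 8) k) ^ 2 =
      !![0,0,0,0,0,0,0,-(α₁*α₁*α₂*α₂);
         0,α₃,0,0,0,0,α₁*α₂*α₂,0;
         0,0,0,0,0,-(α₁*α₁*α₂),0,0;
         0,0,0,α₃,α₁*α₂,0,0,0;
         0,0,0,-(α₁*α₂),0,0,0,0;
         0,0,α₂,0,0,α₃,0,0;
         0,-α₁,0,0,0,0,0,0;
         1,0,0,0,0,0,0,α₃] := by
  ext i j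
  fin_cases i <;> fin_cases j <;>
    simp [pow_two, Matrix.mul_apply, Fin.sum_univ_eight] <;> ring

lemma aux3b (k : Type*) [Field k] (α₁ α₂ α₃ : k) :
    (!![0,0,0,α₁*α₂,α₃,0,0,0;
         0,0,0,0,0,α₁*α₂,0,0;
         0,α₁,0,0,0,0,α₃,0;
         0,0,0,0,0,0,0,α₁*α₂;
         1,0,0,0,0,0,0,0;
         0,0,0,0,0,0,-α₂,0;
         0,0,1,0,0,0,0,0;
         0,0,0,0,-1,0,0,0] : Matrix (Fin 8) (Fin 8) k) ^ 2 =
      !![α₃,0,0,0,0,0,0,α₁*α₁*α₂*α₂;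
         0,0,0,0,0,0,-(α₁*α₂*α₂),0;
         0,0,α₃,0,0,α₁*α₁*α₂,0,0;
         0,0,0,0,-(α₁*α₂),0,0,0;
         0,0,0,α₁*α₂,α₃,0,0,0;
         0,0,-α₂,0,0,0,0,0;
         0,α₁,0,0,0,0,α₃,0;
         -1,0,0,0,0,0,0,0] := by
  ext i j
  fin_cases i <;> fin_cases j <;>
    simp [pow_two, Matrix.mul_apply, Fin.sum_univ_eight] <;> ring

lemma aux3 (k : Type*) [Field k] (α₁ α₂ α₃ : k) :
    (!![0,0,0,0,α₁*α₂,0,0,0;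
         0,0,α₂,0,0,α₃,0,0;
         0,0,0,0,0,0,α₁*α₂,0;
         1,0,0,0,0,0,0,α₃;
         0,0,0,0,0,0,0,-(α₁*α₂);
         0,1,0,0,0,0,0,0;
         0,0,0,0,0,-α₁,0,0;
         0,0,0,1,0,0,0,0] : Matrix (Fin 8) (Fin 8) k) ^ 2 +
      (!![0,0,0,α₁*α₂,α₃,0,0,0;
         0,0,0,0,0,α₁*α₂,0,0;
         0,α₁,0,0,0,0,α₃,0;
         0,0,0,0,0,0,0,α₁*α₂;
         1,0,0,0,0,0,0,0;
         0,0,0,0,0,0,-α₂,0;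
         0,0,1,0,0,0,0,0;
         0,0,0,0,-1,0,0,0] : Matrix (Fin 8) (Fin 8) k) ^ 2
      = α₃ • (1 : Matrix (Fin 8) (Fin 8) k) := by
  rw [aux3a, aux3b]
  ext i j
  fin_cases i <;> fin_cases j <;>
    simp [Matrix.one_apply] <;> ring

/-- The matrices [a₁], [a₂] of the 8-dimensional induced module P satisfy
[a₁]² = α₁·I, [a₂]² = α₂·I and ([a₁][a₂])² + ([a₂][a₁])² = α₃·I. -/
theorem stmt6 (k : Type*) [Field k] (α₁ α₂ α₃ : k) :
    let a1 : Matrix (Fin 8) (Fin 8) k :=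
      !![0,α₁,0,0,0,0,0,0;
         1,0,0,0,0,0,0,0;
         0,0,0,α₁,0,0,0,0;
         0,0,1,0,0,0,0,0;
         0,0,0,0,0,α₁,0,0;
         0,0,0,0,1,0,0,0;
         0,0,0,0,0,0,0,α₁;
         0,0,0,0,0,0,1,0]
    let a2 : Matrix (Fin 8) (Fin 8) k :=
      !![0,0,α₂,0,0,α₃,0,0;
         0,0,0,0,α₂,0,0,0;
         1,0,0,0,0,0,0,α₃;
         0,0,0,0,0,0,α₂,0;
         0,1,0,0,0,0,0,0;
         0,0,0,0,0,0,0,-α₂;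
         0,0,0,1,0,0,0,0;
         0,0,0,0,0,-1,0,0]
    a1 ^ 2 = α₁ • (1 : Matrix (Fin 8) (Fin 8) k) ∧
    a2 ^ 2 = α₂ • (1 : Matrix (Fin 8) (Fin 8) k) ∧
    (a1 * a2) ^ 2 + (a2 * a1) ^ 2 = α₃ • (1 : Matrix (Fin 8) (Fin 8) k) := by
  intro a1 a2
  refine ⟨aux1 k α₁ α₂ α₃, aux2 k α₁ α₂ α₃, ?_⟩
  show _ ^ 2 + _ ^ 2 = _
  rw [show a1 * a2 = _ from aux12 k α₁ α₂ α₃, show a2 * a1 = _ from aux21 k α₁ α₂ α₃]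
  exact aux3 k α₁ α₂ α₃
end

section
/- Let α₁ = α₂ = α₃ = 0 and let P = k⁸ with the module structure given by the matrices [a₁] and [a₂] of the regular induced module (i.e., [a₁] has entries (2,1)=(4,3)=(6,5)=(8,7)=1, else 0; [a₂] has entries (3,1)=(5,2)=(7,4)=1,(8,6)=−1, else 0). Then P is indecomposable as a module over the algebra generated by [a₁], [a₂], g₁ = diag(1,−1,−1,1,1,−1,−1,1), and g₂ = diag(1,1,−1,−1,−1,−1,1,1). -/
private lemma stmt7_auxA1 (k : Type*) [Field k] (v : Fin 8 → k) :
    (!![0,0,0,0,0,0,0,0;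
        1,0,0,0,0,0,0,0;
        0,0,0,0,0,0,0,0;
        0,0,1,0,0,0,0,0;
        0,0,0,0,0,0,0,0;
        0,0,0,0,1,0,0,0;
        0,0,0,0,0,0,0,0;
        0,0,0,0,0,0,1,0] : Matrix (Fin 8) (Fin 8) k).mulVec v
      = ![0, v 0, 0, v 2, 0, v 4, 0, v 6] := by
  simp only [Matrix.cons_mulVec, Matrix.cons_dotProduct, Matrix.dotProduct_of_isEmpty,
    Matrix.empty_mulVec, Matrix.vecHead, Matrix.vecTail, Function.comp_apply,
    zero_mul, one_mul, neg_mul, zero_add, add_zero, neg_zero]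
  rfl

private lemma stmt7_auxA2 (k : Type*) [Field k] (v : Fin 8 → k) :
    (!![0,0,0,0,0,0,0,0;
        0,0,0,0,0,0,0,0;
        1,0,0,0,0,0,0,0;
        0,0,0,0,0,0,0,0;
        0,1,0,0,0,0,0,0;
        0,0,0,0,0,0,0,0;
        0,0,0,1,0,0,0,0;
        0,0,0,0,0,-1,0,0] : Matrix (Fin 8) (Fin 8) k).mulVec v
      = ![0, 0, v 0, 0, v 1, 0, v 3, -(v 5)] := by
  simp only [Matrix.cons_mulVec, Matrix.cons_dotProduct, Matrix.dotProduct_of_isEmpty,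
    Matrix.empty_mulVec, Matrix.vecHead, Matrix.vecTail, Function.comp_apply,
    zero_mul, one_mul, neg_mul, zero_add, add_zero, neg_zero]
  rfl

/-- Key lemma: every nonzero submodule invariant under a1 and a2 contains e₈. -/
private lemma stmt7_key (k : Type*) [Field k] (U : Submodule k (Fin 8 → k))
    (m1 : ∀ v ∈ U, (![0, v 0, 0, v 2, 0, v 4, 0, v 6] : Fin 8 → k) ∈ U)
    (m2 : ∀ v ∈ U, (![0, 0, v 0, 0, v 1, 0, v 3, -(v 5)] : Fin 8 → k) ∈ U)
    (hUne : U ≠ ⊥) : (![0,0,0,0,0,0,0,1] : Fin 8 → k) ∈ U := by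
  obtain ⟨v, hvU, hvne⟩ := Submodule.exists_mem_ne_zero_of_ne_bot hUne
  have fin8 : ∀ c : k, c ≠ 0 → (![0,0,0,0,0,0,0,c] : Fin 8 → k) ∈ U →
      (![0,0,0,0,0,0,0,1] : Fin 8 → k) ∈ U := by
    intro c hc hmem
    have h : (![0,0,0,0,0,0,0,1] : Fin 8 → k) = c⁻¹ • (![0,0,0,0,0,0,0,c] : Fin 8 → k) := by
      simp only [Matrix.smul_cons, Matrix.smul_empty, smul_eq_mul, mul_zero,
        inv_mul_cancel₀ hc]
    rw [h]
    exact U.smul_mem _ hmem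
  by_cases h0 : v 0 = 0
  · by_cases h1 : v 1 = 0
    · by_cases h2 : v 2 = 0
      · by_cases h3 : v 3 = 0
        · by_cases h4 : v 4 = 0
          · by_cases h5 : v 5 = 0
            · by_cases h6 : v 6 = 0
              · -- only v 7 can be nonzero
                have h7 : v 7 ≠ 0 := by
                  intro h7
                  apply hvne
                  funext i
                  fin_cases i <;> assumption
                apply fin8 (v 7) h7
                have hv : v = (![0,0,0,0,0,0,0,v 7] : Fin 8 → k) := by
                  funext i
                  fin_cases i <;> (try rfl) <;> (try simp_all) <;> rfl
                rw [← hv]; exact hvU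
              · -- v 6 ≠ 0 : apply a1 once
                have t1 : (![0,0,0,0,0,0,0,v 6] : Fin 8 → k) ∈ U := by
                  have := m1 v hvU; rw [h0, h2, h4] at this; exact this
                exact fin8 _ h6 t1
            · -- v 5 ≠ 0 : apply a2 once
              have t1 : (![0,0,0,0,0,0,0,-(v 5)] : Fin 8 → k) ∈ U := by
                have := m2 v hvU; rw [h0, h1, h3] at this; exact this
              exact fin8 _ (neg_ne_zero.mpr h5) t1
          · -- v 4 ≠ 0 : a2 ∘ a1
            have t1 : (![0,0,0,0,0,v 4,0,v 6] : Fin 8 → k) ∈ U := by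
              have := m1 v hvU; rw [h0, h2] at this; exact this
            have t2 : (![0,0,0,0,0,0,0,-(v 4)] : Fin 8 → k) ∈ U := m2 _ t1
            exact fin8 _ (neg_ne_zero.mpr h4) t2
        · -- v 3 ≠ 0 : a1 ∘ a2
          have t1 : (![0,0,0,0,0,0,v 3,-(v 5)] : Fin 8 → k) ∈ U := by
            have := m2 v hvU; rw [h0, h1] at this; exact this
          have t2 : (![0,0,0,0,0,0,0,v 3] : Fin 8 → k) ∈ U := m1 _ t1
          exact fin8 _ h3 t2
      · -- v 2 ≠ 0 : a1 ∘ a2 ∘ a1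
        have t1 : (![0,0,0,v 2,0,v 4,0,v 6] : Fin 8 → k) ∈ U := by
          have := m1 v hvU; rw [h0] at this; exact this
        have t2 : (![0,0,0,0,0,0,v 2,-(v 4)] : Fin 8 → k) ∈ U := m2 _ t1
        have t3 : (![0,0,0,0,0,0,0,v 2] : Fin 8 → k) ∈ U := m1 _ t2
        exact fin8 _ h2 t3
    · -- v 1 ≠ 0 : a2 ∘ a1 ∘ a2
      have t1 : (![0,0,0,0,v 1,0,v 3,-(v 5)] : Fin 8 → k) ∈ U := by
        have := m2 v hvU; rw [h0] at this; exact this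
      have t2 : (![0,0,0,0,0,v 1,0,v 3] : Fin 8 → k) ∈ U := m1 _ t1
      have t3 : (![0,0,0,0,0,0,0,-(v 1)] : Fin 8 → k) ∈ U := m2 _ t2
      exact fin8 _ (neg_ne_zero.mpr h1) t3
  · -- v 0 ≠ 0 : a1 ∘ a2 ∘ a1 ∘ a2
    have t1 : (![0,0,v 0,0,v 1,0,v 3,-(v 5)] : Fin 8 → k) ∈ U := m2 v hvU
    have t2 : (![0,0,0,v 0,0,v 1,0,v 3] : Fin 8 → k) ∈ U := m1 _ t1
    have t3 : (![0,0,0,0,0,0,v 0,-(v 1)] : Fin 8 → k) ∈ U := m2 _ t2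
    have t4 : (![0,0,0,0,0,0,0,v 0] : Fin 8 → k) ∈ U := m1 _ t3
    exact fin8 _ h0 t4

/-- For α₁ = α₂ = α₃ = 0, the 8-dimensional induced module P is indecomposable over the
algebra generated by [a₁], [a₂], g₁ and g₂. -/
theorem stmt7 (k : Type*) [Field k] [CharZero k] [IsAlgClosed k] :
    let a1 : Matrix (Fin 8) (Fin 8) k :=
      !![0,0,0,0,0,0,0,0;
         1,0,0,0,0,0,0,0;
         0,0,0,0,0,0,0,0;
         0,0,1,0,0,0,0,0;
         0,0,0,0,0,0,0,0;
         0,0,0,0,1,0,0,0;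
         0,0,0,0,0,0,0,0;
         0,0,0,0,0,0,1,0]
    let a2 : Matrix (Fin 8) (Fin 8) k :=
      !![0,0,0,0,0,0,0,0;
         0,0,0,0,0,0,0,0;
         1,0,0,0,0,0,0,0;
         0,0,0,0,0,0,0,0;
         0,1,0,0,0,0,0,0;
         0,0,0,0,0,0,0,0;
         0,0,0,1,0,0,0,0;
         0,0,0,0,0,-1,0,0]
    let g1 : Matrix (Fin 8) (Fin 8) k := Matrix.diagonal ![1,-1,-1,1,1,-1,-1,1]
    let g2 : Matrix (Fin 8) (Fin 8) k := Matrix.diagonal ![1,1,-1,-1,-1,-1,1,1]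
    ∀ S T : Submodule k (Fin 8 → k),
      (∀ v ∈ S, a1.mulVec v ∈ S ∧ a2.mulVec v ∈ S ∧ g1.mulVec v ∈ S ∧ g2.mulVec v ∈ S) →
      (∀ v ∈ T, a1.mulVec v ∈ T ∧ a2.mulVec v ∈ T ∧ g1.mulVec v ∈ T ∧ g2.mulVec v ∈ T) →
      S ⊓ T = ⊥ → S ⊔ T = ⊤ → S = ⊥ ∨ T = ⊥ := by
  intro a1 a2 g1 g2 S T hS hT hdisj _
  by_contra hcon
  push_neg at hcon
  obtain ⟨hSne, hTne⟩ := hcon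
  have m1S : ∀ v ∈ S, (![0, v 0, 0, v 2, 0, v 4, 0, v 6] : Fin 8 → k) ∈ S :=
    fun v hv => stmt7_auxA1 k v ▸ (hS v hv).1
  have m2S : ∀ v ∈ S, (![0, 0, v 0, 0, v 1, 0, v 3, -(v 5)] : Fin 8 → k) ∈ S :=
    fun v hv => stmt7_auxA2 k v ▸ (hS v hv).2.1
  have m1T : ∀ v ∈ T, (![0, v 0, 0, v 2, 0, v 4, 0, v 6] : Fin 8 → k) ∈ T :=
    fun v hv => stmt7_auxA1 k v ▸ (hT v hv).1
  have m2T : ∀ v ∈ T, (![0, 0, v 0, 0, v 1, 0, v 3, -(v 5)] : Fin 8 → k) ∈ T :=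
    fun v hv => stmt7_auxA2 k v ▸ (hT v hv).2.1
  have heS := stmt7_key k S m1S m2S hSne
  have heT := stmt7_key k T m1T m2T hTne
  have hmem : (![0,0,0,0,0,0,0,1] : Fin 8 → k) ∈ S ⊓ T := ⟨heS, heT⟩
  rw [hdisj, Submodule.mem_bot] at hmem
  have h7 : (![0,0,0,0,0,0,0,1] : Fin 8 → k) 7 = 1 := rfl
  rw [hmem] at h7
  exact one_ne_zero h7.symm
end

section
/- Let M₃ be the 3-dimensional module over the free algebra k⟨a₁,a₂⟩ on basis {u,v,w} with a₁·v = u, a₂·v = w, and all other actions of a₁, a₂ on basis vectors zero (type M₃,₂ in the paper). Then a₁² = a₂² = a₁a₂a₁a₂ + a₂a₁a₂a₁ = 0 on M₃, and M₃ is indecomposable as a module over the algebra generated by a₁, a₂, g₁ = diag(ε₁, −ε₁, ε₁) and g₂ = diag(ε₂, ε₂, −ε₂) for any signs ε₁, ε₂ ∈ {±1} (taking the basis order u, v, w). -/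
/-- The 3-dimensional module M₃,₂ (basis u,v,w with a₁·v = u, a₂·v = w) satisfies
a₁² = a₂² = a₁a₂a₁a₂ + a₂a₁a₂a₁ = 0 and is indecomposable over the algebra generated by
a₁, a₂, g₁ = diag(ε₁,−ε₁,ε₁), g₂ = diag(ε₂,ε₂,−ε₂) for any signs ε₁, ε₂ ∈ {±1}. -/
theorem stmt11 (k : Type*) [Field k] [CharZero k] [IsAlgClosed k]
    (ε₁ ε₂ : k) (h1 : ε₁ = 1 ∨ ε₁ = -1) (h2 : ε₂ = 1 ∨ ε₂ = -1) :
    let a1 : Matrix (Fin 3) (Fin 3) k := !![0,1,0; 0,0,0; 0,0,0]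
    let a2 : Matrix (Fin 3) (Fin 3) k := !![0,0,0; 0,0,0; 0,1,0]
    let g1 : Matrix (Fin 3) (Fin 3) k := Matrix.diagonal ![ε₁, -ε₁, ε₁]
    let g2 : Matrix (Fin 3) (Fin 3) k := Matrix.diagonal ![ε₂, ε₂, -ε₂]
    (a1 ^ 2 = 0 ∧ a2 ^ 2 = 0 ∧ (a1 * a2) ^ 2 + (a2 * a1) ^ 2 = 0) ∧
    ∀ S T : Submodule k (Fin 3 → k),
      (∀ v ∈ S, a1.mulVec v ∈ S ∧ a2.mulVec v ∈ S ∧ g1.mulVec v ∈ S ∧ g2.mulVec v ∈ S) →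
      (∀ v ∈ T, a1.mulVec v ∈ T ∧ a2.mulVec v ∈ T ∧ g1.mulVec v ∈ T ∧ g2.mulVec v ∈ T) →
      S ⊓ T = ⊥ → S ⊔ T = ⊤ → S = ⊥ ∨ T = ⊥ := by
  intro a1 a2 g1 g2
  constructor
  · refine ⟨?_, ?_, ?_⟩ <;>
      · ext i j
        fin_cases i <;> fin_cases j <;>
          simp [a1, a2, pow_two, Matrix.mul_apply, Fin.sum_univ_three,
            Matrix.vecHead, Matrix.vecTail]
  intro S T hS hT hinf hsup
  -- projection lemma: for any g₁,g₂-invariant subspace U and v ∈ U, (v 1) • e₁ ∈ U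
  have proj : ∀ U : Submodule k (Fin 3 → k),
      (∀ v ∈ U, g1.mulVec v ∈ U ∧ g2.mulVec v ∈ U) →
      ∀ v ∈ U, (v 1) • (Pi.single 1 (1:k) : Fin 3 → k) ∈ U := by
    intro U hU v hv
    have h1v := (hU v hv).1
    have h2v := (hU v hv).2
    have h12v := (hU _ h2v).1
    have key : (v 1) • (Pi.single 1 (1:k) : Fin 3 → k) =
        (4:k)⁻¹ • (v - ε₁ • g1.mulVec v + ε₂ • g2.mulVec v
          - (ε₁*ε₂) • g1.mulVec (g2.mulVec v)) := by
      rcases h1 with rfl | rfl <;> rcases h2 with rfl | rfl <;> funext j <;> fin_cases j <;>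
        · simp only [g1, g2, Pi.smul_apply, Pi.add_apply, Pi.sub_apply,
            Matrix.mulVec_diagonal, smul_eq_mul, Pi.single_apply,
            Matrix.cons_val_zero, Matrix.cons_val_one, Matrix.head_cons,
            Matrix.vecHead, Matrix.vecTail]
          norm_num [Fin.ext_iff]
          try rw [inv_mul_eq_div, eq_div_iff (by norm_num : (4:k) ≠ 0)]
          try ring
    rw [key]
    refine U.smul_mem _ (U.sub_mem (U.add_mem (U.sub_mem hv (U.smul_mem _ h1v))
      (U.smul_mem _ h2v)) (U.smul_mem _ h12v))
  -- e₁ lies in S or in T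
  have e1mem : (Pi.single 1 (1:k) : Fin 3 → k) ∈ S ∨ (Pi.single 1 (1:k) : Fin 3 → k) ∈ T := by
    have hmem : (Pi.single 1 (1:k) : Fin 3 → k) ∈ S ⊔ T := by rw [hsup]; trivial
    obtain ⟨s, hs, t, ht, hst⟩ := Submodule.mem_sup.mp hmem
    have hsum : s 1 + t 1 = 1 := by
      have := congrFun hst 1
      simpa using this
    have hsmem := proj S (fun v hv => ⟨(hS v hv).2.2.1, (hS v hv).2.2.2⟩) s hs
    have htmem := proj T (fun v hv => ⟨(hT v hv).2.2.1, (hT v hv).2.2.2⟩) t ht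
    by_cases hs1 : s 1 = 0
    · right
      have ht1 : t 1 = 1 := by rw [hs1, zero_add] at hsum; exact hsum
      rw [ht1, one_smul] at htmem
      exact htmem
    · left
      have := S.smul_mem (s 1)⁻¹ hsmem
      rwa [smul_smul, inv_mul_cancel₀ hs1, one_smul] at this
  -- a₁ e₁ = e₀ and a₂ e₁ = e₂
  have a1e1 : a1.mulVec (Pi.single 1 (1:k) : Fin 3 → k) = Pi.single 0 1 := by
    funext j
    fin_cases j <;> simp [a1, Matrix.mulVec, dotProduct, Fin.sum_univ_three,
      Pi.single_apply, Matrix.vecHead, Matrix.vecTail]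
  have a2e1 : a2.mulVec (Pi.single 1 (1:k) : Fin 3 → k) = Pi.single 2 1 := by
    funext j
    fin_cases j <;> simp [a2, Matrix.mulVec, dotProduct, Fin.sum_univ_three,
      Pi.single_apply, Matrix.vecHead, Matrix.vecTail]
  -- a subspace containing all three basis vectors is everything
  have fulltop : ∀ U : Submodule k (Fin 3 → k),
      (Pi.single 0 (1:k) : Fin 3 → k) ∈ U → (Pi.single 1 (1:k) : Fin 3 → k) ∈ U →
      (Pi.single 2 (1:k) : Fin 3 → k) ∈ U → U = ⊤ := by
    intro U h0 h1' h2'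
    rw [eq_top_iff]
    intro v _
    have hv : v = v 0 • (Pi.single 0 (1:k) : Fin 3 → k)
        + v 1 • (Pi.single 1 (1:k) : Fin 3 → k)
        + v 2 • (Pi.single 2 (1:k) : Fin 3 → k) := by
      funext j
      fin_cases j <;> simp [Pi.single_apply]
    rw [hv]
    exact U.add_mem (U.add_mem (U.smul_mem _ h0) (U.smul_mem _ h1')) (U.smul_mem _ h2')
  rcases e1mem with hmem | hmem
  · right
    have hStop := fulltop S (a1e1 ▸ (hS _ hmem).1) hmem (a2e1 ▸ (hS _ hmem).2.1)
    rw [hStop, top_inf_eq] at hinf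
    exact hinf
  · left
    have hTtop := fulltop T (a1e1 ▸ (hT _ hmem).1) hmem (a2e1 ▸ (hT _ hmem).2.1)
    rw [hTtop, inf_top_eq] at hinf
    exact hinf
end

section
/- Let n = 4k and let Q be the k-vector space with basis {x_{1,j}, x_{2,j}, x_{3,j}, x_{4,j} : 1 ≤ j ≤ k}, with operators a₁, a₂ defined by a₁x_{2,j} = x_{1,j}, a₁x_{4,j} = x_{3,j}, a₂x_{3,j} = x_{2,j}, a₂x_{4,j} = x_{1,j+1} (with x_{1,k+1} = 0), and a₁, a₂ zero on all other basis vectors, and with diagonal group-like operators g₁, g₂, where g₁ acts by +1 on x_{1,j}, x_{3,j} and by −1 on x_{2,j}, x_{4,j}, and g₂ acts by +1 on x_{1,j}, x_{2,j} and by −1 on x_{3,j}, x_{4,j}. Then a₁² = a₂² = 0 and a₁a₂a₁a₂ + a₂a₁a₂a₁ = 0 on Q, and Q is indecomposable as a module over the algebra generated by a₁, a₂, g₁, g₂: it admits no decomposition as a direct sum of two nonzero subspaces invariant under a₁, a₂, g₁, g₂. -/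
open scoped Matrix

section aux
variable {k : Type*} [Field k] {m : ℕ}

lemma aux_nilidem (A : Fin m → Fin m → k)
    (hlow : ∀ j' j : Fin m, (j' : ℕ) ≤ (j : ℕ) → A j' j = 0)
    (hid : ∀ j' j : Fin m, A j' j = ∑ l, A j' l * A l j) :
    ∀ j' j, A j' j = 0 := by
  suffices h : ∀ d (j' j : Fin m), (j' : ℕ) ≤ (j : ℕ) + d → A j' j = 0 by
    intro j' j
    exact h m j' j (by have := j'.isLt; omega)
  intro d
  induction d with
  | zero => intro j' j h; exact hlow j' j (by omega)
  | succ d ih =>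
    intro j' j h
    rw [hid]
    apply Finset.sum_eq_zero
    intro l _
    by_cases hl : (l : ℕ) ≤ (j : ℕ)
    · rw [hlow l j hl, mul_zero]
    · rw [ih j' l (by omega), zero_mul]

lemma ite_pm_iff [CharZero k] {c1 c2 : Prop} [Decidable c1] [Decidable c2]
    (h : (if c1 then (1:k) else -1) = if c2 then 1 else -1) : c1 ↔ c2 := by
  by_cases h1 : c1 <;> by_cases h2 : c2
  · exact iff_of_true h1 h2
  · rw [if_pos h1, if_neg h2] at h
    have h0 : (2:k) = 0 := by linear_combination h
    exact absurd h0 two_ne_zero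
  · rw [if_neg h1, if_pos h2] at h
    have h0 : (2:k) = 0 := by linear_combination -h
    exact absurd h0 two_ne_zero
  · exact iff_of_false h1 h2

end aux


/-- The module Qₙ (n = 4m) with basis {x_{i,j} : 1 ≤ i ≤ 4, 1 ≤ j ≤ m} and action
a₁x_{2,j} = x_{1,j}, a₁x_{4,j} = x_{3,j}, a₂x_{3,j} = x_{2,j}, a₂x_{4,j} = x_{1,j+1}
satisfies a₁² = a₂² = 0, a₁a₂a₁a₂ + a₂a₁a₂a₁ = 0, and is indecomposable over the algebra
generated by a₁, a₂ and the diagonal group-like operators g₁, g₂. -/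
theorem stmt14 (k : Type*) [Field k] [CharZero k] [IsAlgClosed k] (m : ℕ) (hm : 0 < m) :
    let a1 : Matrix (Fin 4 × Fin m) (Fin 4 × Fin m) k := Matrix.of fun p q =>
      if (p.1 = 0 ∧ q.1 = 1 ∧ p.2 = q.2) ∨ (p.1 = 2 ∧ q.1 = 3 ∧ p.2 = q.2) then 1 else 0
    let a2 : Matrix (Fin 4 × Fin m) (Fin 4 × Fin m) k := Matrix.of fun p q =>
      if (p.1 = 1 ∧ q.1 = 2 ∧ p.2 = q.2) ∨
         (p.1 = 0 ∧ q.1 = 3 ∧ (p.2 : ℕ) = (q.2 : ℕ) + 1) then 1 else 0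
    let g1 : Matrix (Fin 4 × Fin m) (Fin 4 × Fin m) k :=
      Matrix.diagonal fun p => if p.1 = 0 ∨ p.1 = 2 then 1 else -1
    let g2 : Matrix (Fin 4 × Fin m) (Fin 4 × Fin m) k :=
      Matrix.diagonal fun p => if p.1 = 0 ∨ p.1 = 1 then 1 else -1
    (a1 ^ 2 = 0 ∧ a2 ^ 2 = 0 ∧ (a1 * a2) ^ 2 + (a2 * a1) ^ 2 = 0) ∧
    ∀ S T : Submodule k (Fin 4 × Fin m → k),
      (∀ v ∈ S, a1.mulVec v ∈ S ∧ a2.mulVec v ∈ S ∧ g1.mulVec v ∈ S ∧ g2.mulVec v ∈ S) →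
      (∀ v ∈ T, a1.mulVec v ∈ T ∧ a2.mulVec v ∈ T ∧ g1.mulVec v ∈ T ∧ g2.mulVec v ∈ T) →
      S ⊓ T = ⊥ → S ⊔ T = ⊤ → S = ⊥ ∨ T = ⊥ := by
  intro a1 a2 g1 g2
  -- row lemmas
  have R1 : ∀ (v : Fin 4 × Fin m → k) (i : Fin 4) (j : Fin m),
      (a1 *ᵥ v) (i, j) = if i = 0 then v (1, j) else if i = 2 then v (3, j) else 0 := by
    intro v i j
    have key : ∀ q : Fin 4 × Fin m, a1 (i, j) q * v q =
        if (i = 0 ∧ q = ((1 : Fin 4), j)) ∨ (i = 2 ∧ q = ((3 : Fin 4), j)) then v q else 0 := by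
      rintro ⟨qi, qj⟩
      show (if (i = 0 ∧ qi = 1 ∧ j = qj) ∨ (i = 2 ∧ qi = 3 ∧ j = qj) then (1:k) else 0) * v (qi, qj) = _
      have hiff : ((i = 0 ∧ qi = 1 ∧ j = qj) ∨ (i = 2 ∧ qi = 3 ∧ j = qj)) ↔
          ((i = 0 ∧ (qi, qj) = ((1 : Fin 4), j)) ∨ (i = 2 ∧ (qi, qj) = ((3 : Fin 4), j))) := by
        simp only [Prod.mk.injEq]
        constructor
        · rintro (⟨h1, h2, h3⟩ | ⟨h1, h2, h3⟩)
          · exact Or.inl ⟨h1, h2, h3.symm⟩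
          · exact Or.inr ⟨h1, h2, h3.symm⟩
        · rintro (⟨h1, h2, h3⟩ | ⟨h1, h2, h3⟩)
          · exact Or.inl ⟨h1, h2, h3.symm⟩
          · exact Or.inr ⟨h1, h2, h3.symm⟩
      rw [if_congr hiff rfl rfl]
      split_ifs with h
      · exact one_mul _
      · exact zero_mul _
    calc (a1 *ᵥ v) (i, j) = ∑ q, a1 (i, j) q * v q := rfl
    _ = ∑ q, (if (i = 0 ∧ q = ((1 : Fin 4), j)) ∨ (i = 2 ∧ q = ((3 : Fin 4), j)) then v q else 0) :=
        Finset.sum_congr rfl fun q _ => key q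
    _ = _ := by
      by_cases h0 : i = 0
      · subst h0; simp
      · by_cases h2 : i = 2
        · subst h2; simp
        · simp [h0, h2]
  have R2 : ∀ (v : Fin 4 × Fin m → k) (i : Fin 4) (j : Fin m),
      (a2 *ᵥ v) (i, j) = if i = 1 then v (2, j)
        else if i = 0 ∧ 0 < (j : ℕ) then
          v (3, ⟨(j : ℕ) - 1, lt_of_le_of_lt (Nat.sub_le _ _) j.isLt⟩)
        else 0 := by
    intro v i j
    have key : ∀ q : Fin 4 × Fin m, a2 (i, j) q * v q =
        if (i = 1 ∧ q = ((2 : Fin 4), j)) ∨ (i = 0 ∧ 0 < (j : ℕ) ∧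
            q = ((3 : Fin 4), ⟨(j : ℕ) - 1, lt_of_le_of_lt (Nat.sub_le _ _) j.isLt⟩)) then v q else 0 := by
      rintro ⟨qi, qj⟩
      show (if (i = 1 ∧ qi = 2 ∧ j = qj) ∨ (i = 0 ∧ qi = 3 ∧ (j:ℕ) = (qj:ℕ) + 1) then (1:k) else 0)
          * v (qi, qj) = _
      have hiff : ((i = 1 ∧ qi = 2 ∧ j = qj) ∨ (i = 0 ∧ qi = 3 ∧ (j:ℕ) = (qj:ℕ) + 1)) ↔
          ((i = 1 ∧ (qi, qj) = ((2 : Fin 4), j)) ∨ (i = 0 ∧ 0 < (j : ℕ) ∧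
            (qi, qj) = ((3 : Fin 4), ⟨(j : ℕ) - 1, lt_of_le_of_lt (Nat.sub_le _ _) j.isLt⟩))) := by
        simp only [Prod.mk.injEq, Fin.ext_iff]
        constructor
        · rintro (⟨h1, h2, h3⟩ | ⟨h1, h2, h3⟩)
          · exact Or.inl ⟨h1, h2, h3.symm⟩
          · exact Or.inr ⟨h1, by omega, h2, by omega⟩
        · rintro (⟨h1, h2, h3⟩ | ⟨h1, h2, h3, h4⟩)
          · exact Or.inl ⟨h1, h2, h3.symm⟩
          · exact Or.inr ⟨h1, h3, by omega⟩
      rw [if_congr hiff rfl rfl]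
      split_ifs with h
      · exact one_mul _
      · exact zero_mul _
    calc (a2 *ᵥ v) (i, j) = ∑ q, a2 (i, j) q * v q := rfl
    _ = ∑ q, (if (i = 1 ∧ q = ((2 : Fin 4), j)) ∨ (i = 0 ∧ 0 < (j : ℕ) ∧
            q = ((3 : Fin 4), ⟨(j : ℕ) - 1, lt_of_le_of_lt (Nat.sub_le _ _) j.isLt⟩)) then v q else 0) :=
        Finset.sum_congr rfl fun q _ => key q
    _ = _ := by
      by_cases h1 : i = 1
      · subst h1; simp
      · by_cases h0 : i = 0
        · subst h0
          by_cases hj : 0 < (j : ℕ)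
          · simp [hj]
          · simp [hj]
        · simp [h0, h1]
  -- kill lemmas
  have K1 : ∀ w : Fin 4 × Fin m → k, (∀ j, w (1, j) = 0) → (∀ j, w (3, j) = 0) → a1 *ᵥ w = 0 := by
    intro w h1 h3
    funext p
    obtain ⟨i, j⟩ := p
    show (a1 *ᵥ w) (i, j) = 0
    rw [R1]
    split_ifs with hi0 hi2
    · exact h1 j
    · exact h3 j
    · rfl
  have K2 : ∀ w : Fin 4 × Fin m → k, (∀ j, w (2, j) = 0) → (∀ j, w (3, j) = 0) → a2 *ᵥ w = 0 := by
    intro w h2 h3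
    funext p
    obtain ⟨i, j⟩ := p
    show (a2 *ᵥ w) (i, j) = 0
    rw [R2]
    split_ifs with hi1 hi0
    · exact h2 j
    · exact h3 _
    · rfl
  have hzero_of : ∀ M : Matrix (Fin 4 × Fin m) (Fin 4 × Fin m) k, (∀ v, M *ᵥ v = 0) → M = 0 := by
    intro M h
    ext p q
    simpa using congrFun (h (Pi.single q 1)) p
  have Z : ∀ y : Fin 4 × Fin m → k, a2 *ᵥ (a1 *ᵥ (a2 *ᵥ y)) = 0 := by
    intro y
    apply K2
    · intro j
      rw [R1]
      simp only [Fin.reduceEq, if_false, if_true, reduceIte]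
      rw [R2]
      simp
    · intro j
      rw [R1]
      simp
  constructor
  · refine ⟨?_, ?_, ?_⟩
    · rw [pow_two]
      apply hzero_of
      intro v
      rw [← Matrix.mulVec_mulVec]
      apply K1
      · intro j; rw [R1]; simp
      · intro j; rw [R1]; simp
    · rw [pow_two]
      apply hzero_of
      intro v
      rw [← Matrix.mulVec_mulVec]
      apply K2
      · intro j; rw [R2]; simp
      · intro j; rw [R2]; simp
    · have e1 : (a1 * a2) ^ 2 = 0 := by
        apply hzero_of
        intro v
        have h : (a1 * a2) ^ 2 *ᵥ v = a1 *ᵥ (a2 *ᵥ (a1 *ᵥ (a2 *ᵥ v))) := by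
          simp [Matrix.mulVec_mulVec, pow_two, Matrix.mul_assoc]
        rw [h, Z, Matrix.mulVec_zero]
      have e2 : (a2 * a1) ^ 2 = 0 := by
        apply hzero_of
        intro v
        have h : (a2 * a1) ^ 2 *ᵥ v = a2 *ᵥ (a1 *ᵥ (a2 *ᵥ (a1 *ᵥ v))) := by
          simp [Matrix.mulVec_mulVec, pow_two, Matrix.mul_assoc]
        rw [h, Z]
      rw [e1, e2, add_zero]
  intro S T hS hT hdisj hsup
  have hcompl : IsCompl S T := ⟨disjoint_iff.mpr hdisj, codisjoint_iff.mpr hsup⟩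
  set P : (Fin 4 × Fin m → k) →ₗ[k] (Fin 4 × Fin m → k) :=
    S.subtype ∘ₗ (S.projectionOnto T hcompl) with hPdef
  have hmem : ∀ v, P v ∈ S := fun v => (S.projectionOnto T hcompl v).2
  have hPS : ∀ v ∈ S, P v = v := fun v hv =>
    congrArg Subtype.val (Submodule.linearProjOfIsCompl_apply_left hcompl ⟨v, hv⟩)
  have hPT : ∀ v ∈ T, P v = 0 := by
    intro v hv
    have h := Submodule.projectionOnto_apply_of_mem_right hcompl hv
    show S.subtype _ = 0
    rw [h]
    simp
  have hPsub : ∀ v, v - P v ∈ T := by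
    intro v
    have hv : v ∈ S ⊔ T := by rw [hsup]; exact Submodule.mem_top
    obtain ⟨s, hs, t, ht, rfl⟩ := Submodule.mem_sup.mp hv
    have h : P (s + t) = s := by rw [map_add, hPS s hs, hPT t ht, add_zero]
    rw [h]
    simpa using ht
  have hidem : ∀ v, P (P v) = P v := fun v => hPS _ (hmem v)
  have hcomm : ∀ M : Matrix (Fin 4 × Fin m) (Fin 4 × Fin m) k,
      (∀ v ∈ S, M *ᵥ v ∈ S) → (∀ v ∈ T, M *ᵥ v ∈ T) → ∀ v, P (M *ᵥ v) = M *ᵥ (P v) := by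
    intro M hMS hMT v
    have hv : P v + (v - P v) = v := by abel
    have h1 : M *ᵥ v = M *ᵥ (P v) + M *ᵥ (v - P v) := by rw [← Matrix.mulVec_add, hv]
    rw [h1, map_add, hPS _ (hMS _ (hmem v)), hPT _ (hMT _ (hPsub v)), add_zero]
  have hcomm1 : ∀ v, P (a1 *ᵥ v) = a1 *ᵥ (P v) :=
    hcomm a1 (fun v hv => (hS v hv).1) (fun v hv => (hT v hv).1)
  have hcomm2 : ∀ v, P (a2 *ᵥ v) = a2 *ᵥ (P v) :=
    hcomm a2 (fun v hv => (hS v hv).2.1) (fun v hv => (hT v hv).2.1)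
  have hcommg1 : ∀ v, P (g1 *ᵥ v) = g1 *ᵥ (P v) :=
    hcomm g1 (fun v hv => (hS v hv).2.2.1) (fun v hv => (hT v hv).2.2.1)
  have hcommg2 : ∀ v, P (g2 *ᵥ v) = g2 *ᵥ (P v) :=
    hcomm g2 (fun v hv => (hS v hv).2.2.2) (fun v hv => (hT v hv).2.2.2)
  -- diagonal row lemmas
  have Rg1 : ∀ (v : Fin 4 × Fin m → k) (q : Fin 4 × Fin m),
      (g1 *ᵥ v) q = (if q.1 = 0 ∨ q.1 = 2 then (1:k) else -1) * v q := by
    intro v q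
    exact Matrix.mulVec_diagonal _ _ _
  have Rg2 : ∀ (v : Fin 4 × Fin m → k) (q : Fin 4 × Fin m),
      (g2 *ᵥ v) q = (if q.1 = 0 ∨ q.1 = 1 then (1:k) else -1) * v q := by
    intro v q
    exact Matrix.mulVec_diagonal _ _ _
  -- support lemma
  have hsupp : ∀ (i : Fin 4) (j : Fin m) (p : Fin 4 × Fin m), p.1 ≠ i →
      P (Pi.single (i, j) (1:k)) p = 0 := by
    intro i j p hpi
    obtain ⟨pi, pj⟩ := p
    have hg1v : g1 *ᵥ Pi.single (i, j) (1:k)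
        = (if i = 0 ∨ i = 2 then (1:k) else -1) • (Pi.single (i, j) (1:k) : Fin 4 × Fin m → k) := by
      funext q
      rw [Rg1]
      by_cases hq : q = (i, j)
      · subst hq; simp
      · simp [Pi.single_apply, hq]
    have hg2v : g2 *ᵥ Pi.single (i, j) (1:k)
        = (if i = 0 ∨ i = 1 then (1:k) else -1) • (Pi.single (i, j) (1:k) : Fin 4 × Fin m → k) := by
      funext q
      rw [Rg2]
      by_cases hq : q = (i, j)
      · subst hq; simp
      · simp [Pi.single_apply, hq]
    have E1 := hcommg1 (Pi.single (i, j) (1:k))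
    rw [hg1v, map_smul] at E1
    have e1 := congrFun E1 (pi, pj)
    rw [Rg1] at e1
    simp only [Pi.smul_apply, smul_eq_mul] at e1
    have E2 := hcommg2 (Pi.single (i, j) (1:k))
    rw [hg2v, map_smul] at E2
    have e2 := congrFun E2 (pi, pj)
    rw [Rg2] at e2
    simp only [Pi.smul_apply, smul_eq_mul] at e2
    by_cases hw : P (Pi.single (i, j) (1:k)) (pi, pj) = 0
    · exact hw
    exfalso
    apply hpi
    have i1 := ite_pm_iff (mul_right_cancel₀ hw e1)
    have i2 := ite_pm_iff (mul_right_cancel₀ hw e2)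
    show pi = i
    have key : ∀ x y : Fin 4, ((x = 0 ∨ x = 2) ↔ (y = 0 ∨ y = 2)) →
        ((x = 0 ∨ x = 1) ↔ (y = 0 ∨ y = 1)) → y = x := by decide
    exact key i pi i1 i2
  -- decomposition into basis vectors
  have hdecomp : ∀ v : Fin 4 × Fin m → k,
      v = ∑ p, v p • (Pi.single p (1:k) : Fin 4 × Fin m → k) := by
    intro v
    have h1 : ∀ p : Fin 4 × Fin m,
        v p • (Pi.single p (1:k) : Fin 4 × Fin m → k) = Pi.single p (v p) := by
      intro p
      rw [← Pi.single_smul, smul_eq_mul, mul_one]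
    calc v = ∑ p, Pi.single p (v p) := (Finset.univ_sum_single v).symm
    _ = ∑ p, v p • (Pi.single p (1:k) : Fin 4 × Fin m → k) :=
        Finset.sum_congr rfl fun p _ => (h1 p).symm
  have hexpand : ∀ v, P v = ∑ p, v p • P (Pi.single p (1:k)) := by
    intro v
    conv_lhs => rw [hdecomp v]
    rw [map_sum]
    exact Finset.sum_congr rfl fun p _ => map_smul P _ _
  -- basis images under a1, a2
  have ha1E1 : ∀ j : Fin m, a1 *ᵥ (Pi.single ((1:Fin 4), j) (1:k) : Fin 4 × Fin m → k)
      = (Pi.single ((0:Fin 4), j) (1:k) : Fin 4 × Fin m → k) := by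
    intro j
    funext p
    obtain ⟨i, jj⟩ := p
    rw [R1]
    split_ifs with h0 h2
    · subst h0; simp [Pi.single_apply, Prod.ext_iff]
    · subst h2; simp [Pi.single_apply, Prod.ext_iff]
    · symm; simp [Pi.single_apply, Prod.ext_iff, h0]
  have ha1E3 : ∀ j : Fin m, a1 *ᵥ (Pi.single ((3:Fin 4), j) (1:k) : Fin 4 × Fin m → k)
      = (Pi.single ((2:Fin 4), j) (1:k) : Fin 4 × Fin m → k) := by
    intro j
    funext p
    obtain ⟨i, jj⟩ := p
    rw [R1]
    split_ifs with h0 h2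
    · subst h0; simp [Pi.single_apply, Prod.ext_iff]
    · subst h2; simp [Pi.single_apply, Prod.ext_iff]
    · symm; simp [Pi.single_apply, Prod.ext_iff, h2]
  have ha2E2 : ∀ j : Fin m, a2 *ᵥ (Pi.single ((2:Fin 4), j) (1:k) : Fin 4 × Fin m → k)
      = (Pi.single ((1:Fin 4), j) (1:k) : Fin 4 × Fin m → k) := by
    intro j
    funext p
    obtain ⟨i, jj⟩ := p
    rw [R2]
    split_ifs with h1 h0
    · subst h1; simp [Pi.single_apply, Prod.ext_iff]
    · obtain ⟨h0', hj⟩ := h0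
      subst h0'
      simp [Pi.single_apply, Prod.ext_iff]
    · symm; simp [Pi.single_apply, Prod.ext_iff, h1]
  have ha2E3 : ∀ (j : Fin m) (hj : (j:ℕ) + 1 < m),
      a2 *ᵥ (Pi.single ((3:Fin 4), j) (1:k) : Fin 4 × Fin m → k)
      = (Pi.single ((0:Fin 4), (⟨(j:ℕ)+1, hj⟩ : Fin m)) (1:k) : Fin 4 × Fin m → k) := by
    intro j hj
    funext p
    obtain ⟨i, jj⟩ := p
    rw [R2]
    split_ifs with h1 h0
    · subst h1; simp [Pi.single_apply, Prod.ext_iff]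
    · obtain ⟨h0', hjj⟩ := h0
      subst h0'
      simp only [Pi.single_apply, Prod.mk.injEq, Fin.ext_iff, true_and]
      split_ifs with hx hy hy <;> first | rfl | omega
    · symm
      rw [Pi.single_apply, if_neg]
      rintro hcon
      rw [Prod.ext_iff] at hcon
      obtain ⟨hi, hjj⟩ := hcon
      apply h0
      refine ⟨hi, ?_⟩
      have : (jj:ℕ) = (j:ℕ)+1 := by
        have := congrArg Fin.val hjj
        exact this
      omega
  -- chain equalities between components
  have hA1 : ∀ j j' : Fin m, P (Pi.single ((1:Fin 4), j) (1:k)) ((1:Fin 4), j')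
      = P (Pi.single ((0:Fin 4), j) (1:k)) ((0:Fin 4), j') := by
    intro j j'
    have h := hcomm1 (Pi.single ((1:Fin 4), j) (1:k))
    rw [ha1E1 j] at h
    have h2 := congrFun h ((0:Fin 4), j')
    rw [R1, if_pos rfl] at h2
    exact h2.symm
  have hA2 : ∀ j j' : Fin m, P (Pi.single ((2:Fin 4), j) (1:k)) ((2:Fin 4), j')
      = P (Pi.single ((1:Fin 4), j) (1:k)) ((1:Fin 4), j') := by
    intro j j'
    have h := hcomm2 (Pi.single ((2:Fin 4), j) (1:k))
    rw [ha2E2 j] at h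
    have h2 := congrFun h ((1:Fin 4), j')
    rw [R2, if_pos rfl] at h2
    exact h2.symm
  have hA3 : ∀ j j' : Fin m, P (Pi.single ((3:Fin 4), j) (1:k)) ((3:Fin 4), j')
      = P (Pi.single ((2:Fin 4), j) (1:k)) ((2:Fin 4), j') := by
    intro j j'
    have h := hcomm1 (Pi.single ((3:Fin 4), j) (1:k))
    rw [ha1E3 j] at h
    have h2 := congrFun h ((2:Fin 4), j')
    rw [R1, if_neg (by decide), if_pos rfl] at h2
    exact h2.symm
  have hA30 : ∀ j j' : Fin m, P (Pi.single ((3:Fin 4), j) (1:k)) ((3:Fin 4), j')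
      = P (Pi.single ((0:Fin 4), j) (1:k)) ((0:Fin 4), j') :=
    fun j j' => (hA3 j j').trans ((hA2 j j').trans (hA1 j j'))
  have hcomp : ∀ (i : Fin 4) (j j' : Fin m),
      P (Pi.single (i, j) (1:k)) (i, j') = P (Pi.single ((0:Fin 4), j) (1:k)) ((0:Fin 4), j') := by
    intro i j j'
    fin_cases i
    · rfl
    · exact hA1 j j'
    · exact (hA2 j j').trans (hA1 j j')
    · exact hA30 j j'
  -- shift relation
  have hraw : ∀ (j : Fin m) (hj : (j:ℕ)+1 < m) (j' : Fin m),
      P (Pi.single ((0:Fin 4), (⟨(j:ℕ)+1, hj⟩ : Fin m)) (1:k)) ((0:Fin 4), j')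
      = if 0 < (j':ℕ) then
          P (Pi.single ((0:Fin 4), j) (1:k))
            ((0:Fin 4), (⟨(j':ℕ)-1, lt_of_le_of_lt (Nat.sub_le _ _) j'.isLt⟩ : Fin m))
        else 0 := by
    intro j hj j'
    have h := hcomm2 (Pi.single ((3:Fin 4), j) (1:k))
    rw [ha2E3 j hj] at h
    have h2 := congrFun h ((0:Fin 4), j')
    rw [R2, if_neg (by decide)] at h2
    by_cases hj' : 0 < (j':ℕ)
    · rw [if_pos ⟨rfl, hj'⟩] at h2
      rw [h2, if_pos hj']
      exact hA30 j _
    · rw [if_neg (fun hcon => hj' hcon.2)] at h2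
      rw [h2, if_neg hj']
  have hShift : ∀ (j' j : Fin m), 0 < (j:ℕ) →
      P (Pi.single ((0:Fin 4), j) (1:k)) ((0:Fin 4), j')
      = if 0 < (j':ℕ) then
          P (Pi.single ((0:Fin 4), (⟨(j:ℕ)-1, lt_of_le_of_lt (Nat.sub_le _ _) j.isLt⟩ : Fin m)) (1:k))
            ((0:Fin 4), (⟨(j':ℕ)-1, lt_of_le_of_lt (Nat.sub_le _ _) j'.isLt⟩ : Fin m))
        else 0 := by
    intro j' j h2
    have hjm : (j:ℕ)-1 < m := lt_of_le_of_lt (Nat.sub_le _ _) j.isLt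
    have hj1 : ((⟨(j:ℕ)-1, hjm⟩ : Fin m) : ℕ) + 1 < m := by
      show (j:ℕ)-1+1 < m
      have := j.isLt
      omega
    have hjeq : j = ⟨((⟨(j:ℕ)-1, hjm⟩ : Fin m) : ℕ) + 1, hj1⟩ := by
      apply Fin.ext
      show (j:ℕ) = (j:ℕ)-1+1
      omega
    conv_lhs => rw [hjeq]
    rw [hraw ⟨(j:ℕ)-1, hjm⟩ hj1 j']
  have hupper : ∀ (j' j : Fin m), (j':ℕ) < (j:ℕ) →
      P (Pi.single ((0:Fin 4), j) (1:k)) ((0:Fin 4), j') = 0 := by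
    have H : ∀ (n : ℕ) (j' j : Fin m), (j':ℕ) = n → (j':ℕ) < (j:ℕ) →
        P (Pi.single ((0:Fin 4), j) (1:k)) ((0:Fin 4), j') = 0 := by
      intro n
      induction n with
      | zero =>
        intro j' j h0 hlt
        rw [hShift j' j (by omega), if_neg (by omega)]
      | succ nn ih =>
        intro j' j h0 hlt
        rw [hShift j' j (by omega), if_pos (by omega)]
        exact ih _ _ (by show (j':ℕ)-1 = nn; omega) (by show (j':ℕ)-1 < (j:ℕ)-1; omega)
    exact fun j' j h => H (j':ℕ) j' j rfl h
  have hdiag : ∀ j : Fin m, P (Pi.single ((0:Fin 4), j) (1:k)) ((0:Fin 4), j)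
      = P (Pi.single ((0:Fin 4), (⟨0, hm⟩ : Fin m)) (1:k)) ((0:Fin 4), (⟨0, hm⟩ : Fin m)) := by
    have H : ∀ (n : ℕ) (j : Fin m), (j:ℕ) = n →
        P (Pi.single ((0:Fin 4), j) (1:k)) ((0:Fin 4), j)
        = P (Pi.single ((0:Fin 4), (⟨0, hm⟩ : Fin m)) (1:k)) ((0:Fin 4), (⟨0, hm⟩ : Fin m)) := by
      intro n
      induction n with
      | zero =>
        intro j h0
        have hj : j = ⟨0, hm⟩ := Fin.ext (by show (j:ℕ) = 0; omega)
        rw [hj]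
      | succ nn ih =>
        intro j h0
        rw [hShift j j (by omega), if_pos (by omega)]
        exact ih _ (by show (j:ℕ)-1 = nn; omega)
    exact fun j => H (j:ℕ) j rfl
  -- idempotency relation for the block
  have Hid : ∀ j' j : Fin m,
      P (Pi.single ((0:Fin 4), j) (1:k)) ((0:Fin 4), j')
      = ∑ l, P (Pi.single ((0:Fin 4), l) (1:k)) ((0:Fin 4), j')
          * P (Pi.single ((0:Fin 4), j) (1:k)) ((0:Fin 4), l) := by
    intro j' j
    conv_lhs => rw [← hidem (Pi.single ((0:Fin 4), j) (1:k))]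
    rw [hexpand (P (Pi.single ((0:Fin 4), j) (1:k)))]
    rw [Finset.sum_apply]
    simp only [Pi.smul_apply, smul_eq_mul]
    rw [Fintype.sum_prod_type]
    rw [Finset.sum_eq_single (0 : Fin 4)]
    · exact Finset.sum_congr rfl fun l _ => by ring
    · intro i _ hi
      apply Finset.sum_eq_zero
      intro l _
      rw [hsupp 0 j (i, l) hi, zero_mul]
    · intro h; exact absurd (Finset.mem_univ _) h
  -- the diagonal constant is 0 or 1
  have hcc : P (Pi.single ((0:Fin 4), (⟨0,hm⟩:Fin m)) (1:k)) ((0:Fin 4), (⟨0,hm⟩:Fin m)) = 0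
      ∨ P (Pi.single ((0:Fin 4), (⟨0,hm⟩:Fin m)) (1:k)) ((0:Fin 4), (⟨0,hm⟩:Fin m)) = 1 := by
    have hc2 := Hid (⟨0,hm⟩ : Fin m) (⟨0,hm⟩ : Fin m)
    rw [Finset.sum_eq_single (⟨0,hm⟩ : Fin m)] at hc2
    · have h0 : P (Pi.single ((0:Fin 4), (⟨0,hm⟩:Fin m)) (1:k)) ((0:Fin 4), (⟨0,hm⟩:Fin m))
          * (P (Pi.single ((0:Fin 4), (⟨0,hm⟩:Fin m)) (1:k)) ((0:Fin 4), (⟨0,hm⟩:Fin m)) - 1)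
          = 0 := by linear_combination -hc2
      rcases mul_eq_zero.mp h0 with h | h
      · exact Or.inl h
      · exact Or.inr (by linear_combination h)
    · intro l _ hl
      rw [hupper ⟨0,hm⟩ l (Nat.pos_of_ne_zero fun hzz => hl (Fin.ext hzz)), zero_mul]
    · intro h; exact absurd (Finset.mem_univ _) h
  rcases hcc with hc | hc
  · -- c = 0 : S = ⊥
    left
    have hlow : ∀ j' j : Fin m, (j':ℕ) ≤ (j:ℕ) →
        P (Pi.single ((0:Fin 4), j) (1:k)) ((0:Fin 4), j') = 0 := by
      intro j' j h
      rcases lt_or_eq_of_le h with hlt | heq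
      · exact hupper j' j hlt
      · have hjj : j' = j := Fin.ext heq
        subst hjj
        rw [hdiag j']
        exact hc
    have hA0 := aux_nilidem (k := k)
      (fun j' j => P (Pi.single ((0:Fin 4), j) (1:k)) ((0:Fin 4), j')) hlow Hid
    have hzeroE : ∀ (i : Fin 4) (j : Fin m), P (Pi.single (i, j) (1:k)) = 0 := by
      intro i j
      funext p
      obtain ⟨pi, pj⟩ := p
      show P (Pi.single (i, j) (1:k)) (pi, pj) = (0 : Fin 4 × Fin m → k) (pi, pj)
      by_cases hpi : pi = i
      · subst hpi
        show P (Pi.single (pi, j) (1:k)) (pi, pj) = (0:k)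
        rw [hcomp pi j pj]
        exact hA0 pj j
      · rw [hsupp i j (pi, pj) hpi]
        rfl
    rw [eq_bot_iff]
    intro s hs
    have h1 : P s = s := hPS s hs
    have h2 : P s = 0 := by
      rw [hexpand]
      apply Finset.sum_eq_zero
      rintro ⟨i, j⟩ _
      rw [hzeroE i j, smul_zero]
    rw [Submodule.mem_bot, ← h1, h2]
  · -- c = 1 : T = ⊥
    right
    have hlowB : ∀ j' j : Fin m, (j':ℕ) ≤ (j:ℕ) →
        (if j' = j then (1:k) else 0)
          - P (Pi.single ((0:Fin 4), j) (1:k)) ((0:Fin 4), j') = 0 := by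
      intro j' j h
      rcases lt_or_eq_of_le h with hlt | heq
      · rw [hupper j' j hlt, if_neg (fun hcon => by subst hcon; omega), sub_zero]
      · have hjj : j' = j := Fin.ext heq
        subst hjj
        rw [if_pos rfl, hdiag j', hc]
        norm_num
    have hidB : ∀ j' j : Fin m,
        (if j' = j then (1:k) else 0)
          - P (Pi.single ((0:Fin 4), j) (1:k)) ((0:Fin 4), j')
        = ∑ l, ((if j' = l then (1:k) else 0)
              - P (Pi.single ((0:Fin 4), l) (1:k)) ((0:Fin 4), j'))
            * ((if l = j then (1:k) else 0)
              - P (Pi.single ((0:Fin 4), j) (1:k)) ((0:Fin 4), l)) := by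
      intro j' j
      have expand : ∀ l : Fin m,
          ((if j' = l then (1:k) else 0)
            - P (Pi.single ((0:Fin 4), l) (1:k)) ((0:Fin 4), j'))
          * ((if l = j then (1:k) else 0)
            - P (Pi.single ((0:Fin 4), j) (1:k)) ((0:Fin 4), l))
          = ((if j' = l then (1:k) else 0) * (if l = j then (1:k) else 0)
              - (if j' = l then (1:k) else 0)
                * P (Pi.single ((0:Fin 4), j) (1:k)) ((0:Fin 4), l))
            - (P (Pi.single ((0:Fin 4), l) (1:k)) ((0:Fin 4), j') * (if l = j then (1:k) else 0)
              - P (Pi.single ((0:Fin 4), l) (1:k)) ((0:Fin 4), j')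
                * P (Pi.single ((0:Fin 4), j) (1:k)) ((0:Fin 4), l)) := fun l => by ring
      rw [Finset.sum_congr rfl fun l _ => expand l]
      rw [Finset.sum_sub_distrib, Finset.sum_sub_distrib, Finset.sum_sub_distrib]
      have s1 : ∑ l, (if j' = l then (1:k) else 0) * (if l = j then (1:k) else 0)
          = if j' = j then (1:k) else 0 := by
        simp [ite_mul, one_mul, zero_mul, Finset.sum_ite_eq]
      have s2 : ∑ l, (if j' = l then (1:k) else 0)
            * P (Pi.single ((0:Fin 4), j) (1:k)) ((0:Fin 4), l)
          = P (Pi.single ((0:Fin 4), j) (1:k)) ((0:Fin 4), j') := by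
        simp [ite_mul, one_mul, zero_mul, Finset.sum_ite_eq]
      have s3 : ∑ l, P (Pi.single ((0:Fin 4), l) (1:k)) ((0:Fin 4), j')
            * (if l = j then (1:k) else 0)
          = P (Pi.single ((0:Fin 4), j) (1:k)) ((0:Fin 4), j') := by
        simp [mul_ite, mul_one, mul_zero, Finset.sum_ite_eq']
      rw [s1, s2, s3, ← Hid j' j]
      ring
    have hB0 := aux_nilidem (k := k)
      (fun j' j => (if j' = j then (1:k) else 0)
        - P (Pi.single ((0:Fin 4), j) (1:k)) ((0:Fin 4), j')) hlowB hidB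
    have hAδ : ∀ j' j : Fin m, P (Pi.single ((0:Fin 4), j) (1:k)) ((0:Fin 4), j')
        = if j' = j then (1:k) else 0 := by
      intro j' j
      have h2 : (if j' = j then (1:k) else 0)
          - P (Pi.single ((0:Fin 4), j) (1:k)) ((0:Fin 4), j') = 0 := hB0 j' j
      linear_combination -h2
    have hEid : ∀ (i : Fin 4) (j : Fin m),
        P (Pi.single (i, j) (1:k)) = Pi.single (i, j) (1:k) := by
      intro i j
      funext p
      obtain ⟨pi, pj⟩ := p
      by_cases hpi : pi = i
      · subst hpi
        show P (Pi.single (pi, j) (1:k)) (pi, pj) = _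
        rw [hcomp pi j pj, hAδ pj j]
        simp [Pi.single_apply, Prod.ext_iff]
      · show P (Pi.single (i, j) (1:k)) (pi, pj) = _
        rw [hsupp i j (pi, pj) hpi]
        symm
        simp [Pi.single_apply, Prod.ext_iff, hpi]
    rw [eq_bot_iff]
    intro t ht
    have h1 : P t = 0 := hPT t ht
    have h2 : P t = t := by
      rw [hexpand]
      calc ∑ p, t p • P (Pi.single p (1:k))
          = ∑ p, t p • (Pi.single p (1:k) : Fin 4 × Fin m → k) := by
            refine Finset.sum_congr rfl ?_
            rintro ⟨i, j⟩ _
            rw [hEid i j]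
      _ = t := (hdecomp t).symm
    rw [Submodule.mem_bot, ← h2, h1]
end
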